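/- arXiv:math/0511523 — 2 statements merged into one kernel-verified Lean document; each statement's English description precedes it below -/
import Mathlib

section
/- For all integers i ∈ ℤ, j ∈ ℤ≥0 and polynomials f, g ∈ F[D], the commutator of the differential operators t^i·D·f(D) and t^j·D·g(D) (where D = t·d/dt acts on Laurent polynomials F[t,t^{-1}]) equals t^{i+j}·D·((D+j)f(D+j)g(D) − (D+i)g(D+i)f(D)). -/
/- Operators on the Laurent polynomial ring F[t,t⁻¹], modelled as ℤ →₀ F
   with `Finsupp.single k 1` playing the role of `t^k`. -/

noncomputable section
open Polynomial

variable (F : Type*) [Field F] [CharZero F]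

/-- Multiplication by `t^i`. -/
def Tpow (i : ℤ) : Module.End F (ℤ →₀ F) :=
  Finsupp.lsum F fun k => Finsupp.lsingle (k + i)

/-- The degree operator `D = t · d/dt`, with `D (t^k) = k t^k`. -/
def Dop : Module.End F (ℤ →₀ F) :=
  Finsupp.lsum F fun k => (k : F) • Finsupp.lsingle k

set_option linter.unusedSectionVars false

lemma Tpow_single (i k : ℤ) (b : F) :
    Tpow F i (Finsupp.single k b) = Finsupp.single (k + i) b := by
  rw [Tpow, Finsupp.lsum_single, Finsupp.lsingle_apply]

lemma Dop_single (k : ℤ) (b : F) :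
    Dop F (Finsupp.single k b) = (k : F) • Finsupp.single k b := by
  rw [Dop, Finsupp.lsum_single, LinearMap.smul_apply, Finsupp.lsingle_apply]

lemma Tpow_mul (i j : ℤ) : Tpow F i * Tpow F j = Tpow F (i + j) := by
  refine Finsupp.lhom_ext fun k b => ?_
  rw [Module.End.mul_apply, Tpow_single, Tpow_single, Tpow_single, add_assoc, add_comm j i]

lemma Dop_mul_Tpow (j : ℤ) :
    Dop F * Tpow F j = Tpow F j * aeval (Dop F) (X + C (j : F)) := by
  have : aeval (Dop F) (X + C (j : F)) = Dop F + (j : F) • 1 := by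
    rw [map_add, aeval_X, aeval_C, Algebra.algebraMap_eq_smul_one]
  rw [this]
  refine Finsupp.lhom_ext fun k b => ?_
  rw [Module.End.mul_apply, Module.End.mul_apply, Tpow_single, Dop_single,
    LinearMap.add_apply, Dop_single, LinearMap.smul_apply, Module.End.one_apply,
    map_add, map_smul, map_smul, Tpow_single, ← add_smul]
  push_cast
  ring_nf

lemma aeval_mul_Tpow (j : ℤ) (p : Polynomial F) :
    aeval (Dop F) p * Tpow F j
      = Tpow F j * aeval (Dop F) (p.comp (X + C (j : F))) := by
  induction p using Polynomial.induction_on with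
  | C a => simp [Algebra.algebraMap_eq_smul_one, smul_mul_assoc, mul_smul_comm]
  | add p q hp hq => simp [add_mul, mul_add, hp, hq]
  | monomial n a ih =>
    have h1 : (C a * X ^ (n+1)) = (C a * X ^ n) * X := by ring
    rw [h1, map_mul, aeval_X, mul_assoc, Dop_mul_Tpow, ← mul_assoc, ih, mul_assoc, ← map_mul]
    congr 1
    simp [mul_comp]

/-- For all `i, j ∈ ℤ` and polynomials `f, g ∈ F[D]`,
`[t^i D f(D), t^j D g(D)] = t^{i+j} D ((D+j) f(D+j) g(D) − (D+i) g(D+i) f(D))`. -/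
theorem commutator_tiDf_tjDg (i j : ℤ) (f g : Polynomial F) :
    (Tpow F i * Dop F * aeval (Dop F) f) * (Tpow F j * Dop F * aeval (Dop F) g)
      - (Tpow F j * Dop F * aeval (Dop F) g) * (Tpow F i * Dop F * aeval (Dop F) f)
    = Tpow F (i + j) * Dop F *
        ((Dop F + (j : F) • 1) * aeval (Dop F + (j : F) • 1) f * aeval (Dop F) g
          - (Dop F + (i : F) • 1) * aeval (Dop F + (i : F) • 1) g * aeval (Dop F) f) := by
  have hD : ∀ m : ℤ, Dop F + (m : F) • 1 = aeval (Dop F) (X + C (m : F)) := by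
    intro m; rw [map_add, aeval_X, aeval_C, Algebra.algebraMap_eq_smul_one]
  have hcomp : ∀ (m : ℤ) (p : Polynomial F),
      aeval (Dop F + (m : F) • 1) p = aeval (Dop F) (p.comp (X + C (m : F))) := by
    intro m p; rw [aeval_comp, ← hD]
  have hXp : ∀ r : Polynomial F, Dop F * aeval (Dop F) r = aeval (Dop F) (X * r) := by
    intro r; rw [map_mul, aeval_X]
  have move : ∀ (b : ℤ) (p : Polynomial F) (Z : Module.End F (ℤ →₀ F)),
      aeval (Dop F) p * (Tpow F b * Z)
        = Tpow F b * (aeval (Dop F) (p.comp (X + C (b : F))) * Z) := by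
    intro b p Z; rw [← mul_assoc, aeval_mul_Tpow, mul_assoc]
  have key : ∀ (a b : ℤ) (p q : Polynomial F),
      (Tpow F a * Dop F * aeval (Dop F) p) * (Tpow F b * Dop F * aeval (Dop F) q)
        = Tpow F (a + b) * aeval (Dop F) ((X * p).comp (X + C (b : F)) * (X * q)) := by
    intro a b p q
    simp only [mul_assoc]
    rw [hXp q, move, ← map_mul, ← mul_assoc (Dop F), Dop_mul_Tpow, mul_assoc, ← map_mul,
      ← mul_assoc, Tpow_mul]
    congr 2
    simp only [mul_comp, X_comp, C_comp, add_comp]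
    ring
  rw [key, key, add_comm j i, hcomp, hcomp, hD i, hD j, ← map_mul, ← map_mul, ← map_mul,
    ← map_mul,
    mul_sub (Tpow F (i+j) * Dop F) (aeval (Dop F) ((X + C (j:F)) * f.comp (X + C (j:F)) * g))
      (aeval (Dop F) ((X + C (i:F)) * g.comp (X + C (i:F)) * f)), mul_assoc, hXp, mul_assoc (Tpow F (i+j)) (Dop F), hXp]
  congr 3 <;> · simp only [mul_comp, X_comp, C_comp, add_comp]; ring
end
end

section
/- Suppose p₁, p₂ ∈ F satisfy the two relations obtained from a one-dimensional graded Virasoro-type module with action (t^j D)y_k = p_{j,k} y_{k+j} where p_{1,k} = k̄(k̄+1) + p₁ and p_{2,k} = k̄(k̄+1)(k̄+2) + 3k̄p₁ + p₂ for all k (k̄ = k+α). Then applying [t^3 d/dt, t^4 d/dt] = t^6 d/dt forces 8p₁² + 4p₁³ − 6p₁p₂ + p₂² = 0. -/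
/-- Suppose scalars `P j k` describe a one-dimensional graded module with
`(t^j D) y_k = P j k · y_{k+j}`, where `P 1 k = k̄(k̄+1) + p₁`,
`P 2 k = k̄(k̄+1)(k̄+2) + 3 k̄ p₁ + p₂` (with `k̄ = k + α`), the `P j k` for `j ≥ 3` are
determined by `[tD, t^{j−1}D] = (j−2) t^j D`, and the compatibility condition
`[t^3 d/dt, t^4 d/dt] = t^6 d/dt` (i.e. `[t²D, t³D] = t⁵D`) holds.
Then `8p₁² + 4p₁³ − 6p₁p₂ + p₂² = 0`. -/
theorem virasoro_relation (F : Type*) [Field F] [CharZero F] (α p₁ p₂ : F)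
    (P : ℕ → ℤ → F)
    (h1 : ∀ k : ℤ, P 1 k = ((k : F) + α) * ((k : F) + α + 1) + p₁)
    (h2 : ∀ k : ℤ, P 2 k = ((k : F) + α) * ((k : F) + α + 1) * ((k : F) + α + 2)
        + 3 * ((k : F) + α) * p₁ + p₂)
    (hrec : ∀ j : ℕ, 3 ≤ j → ∀ k : ℤ,
      ((j : F) - 2) * P j k = P 1 (k + (j : ℤ) - 1) * P (j - 1) k - P (j - 1) (k + 1) * P 1 k)
    (hcomp : ∀ k : ℤ, P 3 k * P 2 (k + 3) - P 2 k * P 3 (k + 2) = P 5 k) :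
    8 * p₁ ^ 2 + 4 * p₁ ^ 3 - 6 * p₁ * p₂ + p₂ ^ 2 = 0 := by
  have h3 : ∀ k : ℤ, P 3 k =
      (6 : F) * p₂ + (-6 : F) * p₁ + (-3 : F) * p₁^2 + (6 : F) * ((k : F) + α)
        + (4 : F) * ((k : F) + α) * p₂ + (6 : F) * ((k : F) + α) * p₁
        + (11 : F) * ((k : F) + α)^2 + (6 : F) * ((k : F) + α)^2 * p₁
        + (6 : F) * ((k : F) + α)^3 + (1 : F) * ((k : F) + α)^4 := by
    intro k
    have h := hrec 3 (by norm_num) k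
    norm_num at h
    rw [h1, h2, h2, h1] at h
    push_cast at h
    linear_combination h
  have h4 : ∀ k : ℤ, P 4 k =
      (36 : F) * p₂ + (-48 : F) * p₁ + (-2 : F) * p₁ * p₂ + (-24 : F) * p₁^2
        + (24 : F) * ((k : F) + α) + (40 : F) * ((k : F) + α) * p₂
        + (-10 : F) * ((k : F) + α) * p₁ + (-15 : F) * ((k : F) + α) * p₁^2
        + (50 : F) * ((k : F) + α)^2 + (10 : F) * ((k : F) + α)^2 * p₂
        + (30 : F) * ((k : F) + α)^2 * p₁ + (35 : F) * ((k : F) + α)^3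
        + (10 : F) * ((k : F) + α)^3 * p₁ + (10 : F) * ((k : F) + α)^4
        + (1 : F) * ((k : F) + α)^5 := by
    intro k
    have h := hrec 4 (by norm_num) k
    norm_num at h
    rw [h1, h3, h3, h1] at h
    push_cast at h
    linear_combination (1/2 : F) * h
  have h5 : P 5 0 =
      (240 : F) * p₂ + (-360 : F) * p₁ + (-30 : F) * p₁ * p₂ + (-170 : F) * p₁^2
        + (5 : F) * p₁^3 + (120 : F) * α + (346 : F) * α * p₂ + (-288 : F) * α * p₁
        + (-12 : F) * α * p₁ * p₂ + (-189 : F) * α * p₁^2 + (274 : F) * α^2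
        + (150 : F) * α^2 * p₂ + (75 : F) * α^2 * p₁ + (-45 : F) * α^2 * p₁^2
        + (225 : F) * α^3 + (20 : F) * α^3 * p₂ + (90 : F) * α^3 * p₁
        + (85 : F) * α^4 + (15 : F) * α^4 * p₁ + (15 : F) * α^5 + (1 : F) * α^6 := by
    have h := hrec 5 (by norm_num) 0
    norm_num at h
    rw [h1, h4, h4, h1] at h
    push_cast at h
    linear_combination (1/3 : F) * h
  have H := hcomp 0
  rw [h3, h3, h2, h2, h5] at H
  push_cast at H
  linear_combination (-1/8 : F) * H
end
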